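/- Let φ : M → S^n be a smooth map in the equator coordinates as above, with f = φ^n − π/2. Then on any open set D whose closure is compact and contained in the chart domain, for 0 ≤ j ≤ k−3 there exists a constant C > 0 such that |dA^n_{j+1}| ≤ C( |f| + |df| + |∇df| ). -/

import Mathlib

/-!
In equator coordinates the last row of Christoffel symbols is
`Γ^n_{bc} = -½ sin(2s) g̃_{bc} = cos s · (smooth)`, and a derivative of it in a direction
`∂/∂y^a`, `a < n`, keeps the factor `cos s`. So every term of `A^n_{j+1}` carries a factor
`Γ^n`, a tangential derivative of `Γ^n`, or `∂_i φ^n`: `A^n_{j+1}` lies in the ideal of smooth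
functions generated by `cos φ^n` and the `∂_i φ^n`. Differentiating a member
`cos φ^n · G + ∂_l φ^n · H^l` only produces `cos φ^n`, `dφ^n` and the Hessian of `φ^n` times
continuous functions, and that Hessian is `(∇dφ)^n` up to terms of the same two kinds. Finally
`|cos φ^n| = |sin f| ≤ |f|`, and the continuous coefficients are bounded on the compact `D̄`.
-/
noncomputable section

open scoped BigOperators

namespace Polyharm

/-- Partial derivative of a scalar function on `ℝ^d` in the `i`-th coordinate direction. -/
def pd {d : ℕ} (i : Fin d) (f : (Fin d → ℝ) → ℝ) (x : Fin d → ℝ) : ℝ :=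
  fderiv ℝ f x (Pi.single i 1)

/-- Euclidean norm of a finite family of real numbers. -/
def vnorm {ι : Type} [Fintype ι] (f : ι → ℝ) : ℝ :=
  Real.sqrt (∑ i, f i ^ 2)

/-- Local-coordinate data for maps between Riemannian manifolds: the inverse metric
`g^{ij}` and the Christoffel symbols `Γ^k_{ij}` of a chart of the domain `(M,g)`, and
the Christoffel symbols `Γ^α_{βγ}` of a chart of the target `(N,h)`. -/
structure ChartData (m n : ℕ) where
  ginv : (Fin m → ℝ) → Fin m → Fin m → ℝ
  ΓM : (Fin m → ℝ) → Fin m → Fin m → Fin m → ℝ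
  ΓN : (Fin n → ℝ) → Fin n → Fin n → Fin n → ℝ

variable {m n : ℕ}

/-- Smoothness of the domain data. -/
def ChartData.SmoothDomain (P : ChartData m n) : Prop :=
  (∀ i j, ContDiff ℝ (⊤ : ℕ∞) fun x => P.ginv x i j) ∧
  (∀ k i j, ContDiff ℝ (⊤ : ℕ∞) fun x => P.ΓM x k i j)

/-- Smoothness of the target Christoffel symbols. -/
def ChartData.SmoothTarget (P : ChartData m n) : Prop :=
  ∀ α β γ, ContDiff ℝ (⊤ : ℕ∞) fun y => P.ΓN y α β γ

/-- The chart data comes from Riemannian metrics: `g^{ij}` is symmetric and positive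
definite, and the Christoffel symbols are symmetric in their lower indices. -/
def ChartData.Riemannian (P : ChartData m n) : Prop :=
  (∀ x i j, P.ginv x i j = P.ginv x j i) ∧
  (∀ x (v : Fin m → ℝ), v ≠ 0 → 0 < ∑ i, ∑ j, P.ginv x i j * v i * v j) ∧
  (∀ x k i j, P.ΓM x k i j = P.ΓM x k j i) ∧
  (∀ y α β γ, P.ΓN y α β γ = P.ΓN y α γ β)

/-- The Laplace–Beltrami operator on scalar functions:
`-Δ f = g^{ij} ∂²f/∂x^i∂x^j - g^{ij} Γ^k_{ij} ∂f/∂x^k`. -/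
def lap (P : ChartData m n) (f : (Fin m → ℝ) → ℝ) (x : Fin m → ℝ) : ℝ :=
  -((∑ i, ∑ j, P.ginv x i j * pd i (fun z => pd j f z) x)
    - ∑ i, ∑ j, ∑ k, P.ginv x i j * P.ΓM x k i j * pd k f x)

/-- `φ_i^β = ∂φ^β/∂x^i`. -/
def dphi (φ : (Fin m → ℝ) → Fin n → ℝ) (x : Fin m → ℝ) (i : Fin m) (β : Fin n) : ℝ :=
  pd i (fun z => φ z β) x

/-- `⟨dφ^β, dψ^γ⟩ = g^{ij} φ_i^β ψ_j^γ`. -/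
def dpair (P : ChartData m n) (φ ψ : (Fin m → ℝ) → Fin n → ℝ) (x : Fin m → ℝ)
    (β γ : Fin n) : ℝ :=
  ∑ i, ∑ j, P.ginv x i j * dphi φ x i β * dphi ψ x j γ

/-- Components `R^α_{δβγ}` of the curvature tensor of the target, with the sign
convention `R(∂/∂y^β, ∂/∂y^γ)∂/∂y^δ = R^α_{δβγ} ∂/∂y^α` of the paper. -/
def Rc (P : ChartData m n) (y : Fin n → ℝ) (α δ β γ : Fin n) : ℝ :=
  pd β (fun z => P.ΓN z α γ δ) y - pd γ (fun z => P.ΓN z α β δ) y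
    + ∑ μ, (P.ΓN y α β μ * P.ΓN y μ γ δ - P.ΓN y α γ μ * P.ΓN y μ β δ)

/-- `2S^α_{βωϑ} = ∂Γ^α_{βϑ}/∂y^ω + Γ^γ_{βϑ}Γ^α_{ωγ} + ∂Γ^α_{ωϑ}/∂y^β + Γ^γ_{ωϑ}Γ^α_{βγ}`. -/
def Scoef (P : ChartData m n) (y : Fin n → ℝ) (α β ω ϑ : Fin n) : ℝ :=
  (pd ω (fun z => P.ΓN z α β ϑ) y + (∑ γ, P.ΓN y γ β ϑ * P.ΓN y α ω γ)
    + pd β (fun z => P.ΓN z α ω ϑ) y + ∑ γ, P.ΓN y γ ω ϑ * P.ΓN y α β γ) / 2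

/-- The operator
`A^α(η,ξ) = ξ_i^ϑ(-2 g^{ij} φ_j^β Γ^α_{βϑ}) + η^ϑ((Δφ^β)Γ^α_{βϑ} - g^{ij} φ_j^β φ_i^ω S^α_{βωϑ})`. -/
def Aop (P : ChartData m n) (φ : (Fin m → ℝ) → Fin n → ℝ) (η : Fin n → ℝ)
    (ξ : Fin m → Fin n → ℝ) (x : Fin m → ℝ) (α : Fin n) : ℝ :=
  (∑ ϑ, ∑ i, ξ i ϑ * (-2 * ∑ j, ∑ β, P.ginv x i j * dphi φ x j β * P.ΓN (φ x) α β ϑ))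
    + ∑ ϑ, η ϑ * ((∑ β, lap P (fun z => φ z β) x * P.ΓN (φ x) α β ϑ)
        - ∑ i, ∑ j, ∑ β, ∑ ω,
            P.ginv x i j * dphi φ x j β * dphi φ x i ω * Scoef P (φ x) α β ω ϑ)

/-- The operator `A` applied to (the components of) a section `σ` of `φ⁻¹TN`:
`A(σ, ∂σ)`. -/
def Asec (P : ChartData m n) (φ σ : (Fin m → ℝ) → Fin n → ℝ) (x : Fin m → ℝ)
    (α : Fin n) : ℝ :=
  Aop P φ (σ x) (fun i ϑ => pd i (fun z => σ z ϑ) x) x α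

/-- Components of the tension field `τ^α(φ) = -Δφ^α + g^{ij} Γ^α_{ϑβ} φ_i^ϑ φ_j^β`. -/
def tension (P : ChartData m n) (φ : (Fin m → ℝ) → Fin n → ℝ) (x : Fin m → ℝ)
    (α : Fin n) : ℝ :=
  -(lap P (fun z => φ z α) x)
    + ∑ i, ∑ j, ∑ ϑ, ∑ β,
        P.ginv x i j * P.ΓN (φ x) α ϑ β * dphi φ x i ϑ * dphi φ x j β

/-- The components `u_j` of `Δ̄^j τ(φ)`: `u_0 = τ(φ)` and
`u_{j+1} = Δ u_j + A(u_j, ∂u_j)` (local expression of the rough Laplacian). -/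
def uvar (P : ChartData m n) (φ : (Fin m → ℝ) → Fin n → ℝ) :
    ℕ → (Fin m → ℝ) → Fin n → ℝ
  | 0 => tension P φ
  | j+1 => fun x α => lap P (fun z => uvar P φ j z α) x + Asec P φ (uvar P φ j) x α

/-- `v_j = du_j`, i.e. `v_{j i}^α = ∂u_j^α/∂x^i`. -/
def vvar (P : ChartData m n) (φ : (Fin m → ℝ) → Fin n → ℝ) (j : ℕ) (x : Fin m → ℝ)
    (i : Fin m) (α : Fin n) : ℝ :=
  pd i (fun z => uvar P φ j z α) x

/-- Components of the pull-back covariant derivative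
`(∇̄_{∂_i} σ)^γ = ∂σ^γ/∂x^i + Γ^γ_{βδ}(φ) φ_i^β σ^δ`. -/
def covD (P : ChartData m n) (φ σ : (Fin m → ℝ) → Fin n → ℝ) (i : Fin m)
    (x : Fin m → ℝ) (γ : Fin n) : ℝ :=
  pd i (fun z => σ z γ) x + ∑ β, ∑ δ, P.ΓN (φ x) γ β δ * dphi φ x i β * σ x δ

/-- `(Tr_g R^N(X, dφ(·))dφ(·))^α`. -/
def trRphi (P : ChartData m n) (φ X : (Fin m → ℝ) → Fin n → ℝ) (x : Fin m → ℝ)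
    (α : Fin n) : ℝ :=
  ∑ i, ∑ j, ∑ β, ∑ γ, ∑ δ,
    P.ginv x i j * Rc P (φ x) α δ β γ * X x β * dphi φ x i γ * dphi φ x j δ

/-- `(Tr_g R^N(dφ(·), X)dφ(·))^α`. -/
def trRphi2 (P : ChartData m n) (φ X : (Fin m → ℝ) → Fin n → ℝ) (x : Fin m → ℝ)
    (α : Fin n) : ℝ :=
  ∑ i, ∑ j, ∑ β, ∑ γ, ∑ δ,
    P.ginv x i j * Rc P (φ x) α δ β γ * dphi φ x i β * X x γ * dphi φ x j δ

/-- `(Tr_g R^N(∇̄_{(·)}W, Z)dφ(·))^α`. -/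
def trRD (P : ChartData m n) (φ W Z : (Fin m → ℝ) → Fin n → ℝ) (x : Fin m → ℝ)
    (α : Fin n) : ℝ :=
  ∑ i, ∑ j, ∑ β, ∑ γ, ∑ δ,
    P.ginv x i j * Rc P (φ x) α δ β γ * covD P φ W i x β * Z x γ * dphi φ x j δ

/-- `(Tr_g R^N(W, ∇̄_{(·)}Z)dφ(·))^α`. -/
def trRD2 (P : ChartData m n) (φ W Z : (Fin m → ℝ) → Fin n → ℝ) (x : Fin m → ℝ)
    (α : Fin n) : ℝ :=
  ∑ i, ∑ j, ∑ β, ∑ γ, ∑ δ,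
    P.ginv x i j * Rc P (φ x) α δ β γ * W x β * covD P φ Z i x γ * dphi φ x j δ

/-- Local components of Maeta's `k`-tension field `τ_k(φ)`, for `k = 2s`:
`τ_{2s}(φ) = Δ̄^{2s-1}τ(φ) - R^N(Δ̄^{2s-2}τ(φ), dφ(e_j))dφ(e_j)
  - Σ_{ℓ=1}^{s-1}( R^N(∇̄_{e_j}Δ̄^{s+ℓ-2}τ(φ), Δ̄^{s-ℓ-1}τ(φ))dφ(e_j)
                 - R^N(Δ̄^{s+ℓ-2}τ(φ), ∇̄_{e_j}Δ̄^{s-ℓ-1}τ(φ))dφ(e_j) )`,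
and for `k = 2s+1`:
`τ_{2s+1}(φ) = Δ̄^{2s}τ(φ) - R^N(Δ̄^{2s-1}τ(φ), dφ(e_j))dφ(e_j)
  - Σ_{ℓ=1}^{s-1}( R^N(∇̄_{e_j}Δ̄^{s+ℓ-1}τ(φ), Δ̄^{s-ℓ-1}τ(φ))dφ(e_j)
                 - R^N(Δ̄^{s+ℓ-1}τ(φ), ∇̄_{e_j}Δ̄^{s-ℓ-1}τ(φ))dφ(e_j) )
  - R^N(∇̄_{e_j}Δ̄^{s-1}τ(φ), Δ̄^{s-1}τ(φ))dφ(e_j)`. -/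
def tauK (P : ChartData m n) (φ : (Fin m → ℝ) → Fin n → ℝ) (k : ℕ) (x : Fin m → ℝ)
    (α : Fin n) : ℝ :=
  if Even k then
    uvar P φ (k-1) x α - trRphi P φ (uvar P φ (k-2)) x α
      - ∑ ℓ ∈ Finset.Icc 1 (k/2 - 1),
          (trRD P φ (uvar P φ (k/2 + ℓ - 2)) (uvar P φ (k/2 - ℓ - 1)) x α
            - trRD2 P φ (uvar P φ (k/2 + ℓ - 2)) (uvar P φ (k/2 - ℓ - 1)) x α)
  else
    uvar P φ (k-1) x α - trRphi P φ (uvar P φ (k-2)) x α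
      - (∑ ℓ ∈ Finset.Icc 1 (k/2 - 1),
          (trRD P φ (uvar P φ (k/2 + ℓ - 1)) (uvar P φ (k/2 - ℓ - 1)) x α
            - trRD2 P φ (uvar P φ (k/2 + ℓ - 1)) (uvar P φ (k/2 - ℓ - 1)) x α))
      - trRD P φ (uvar P φ (k/2 - 1)) (uvar P φ (k/2 - 1)) x α

/-- Components `(∇dφ)(∂_i,∂_j)^α` of the second fundamental form of `φ`. -/
def sff (P : ChartData m n) (φ : (Fin m → ℝ) → Fin n → ℝ) (x : Fin m → ℝ)
    (i j : Fin m) (α : Fin n) : ℝ :=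
  pd i (fun z => dphi φ z j α) x - (∑ k, P.ΓM x k i j * dphi φ x k α)
    + ∑ β, ∑ γ, P.ΓN (φ x) α β γ * dphi φ x i β * dphi φ x j γ

/-- Christoffel symbols `Γ^α_{βγ}` of the round sphere `S^{d+1}` in the equator
coordinates `S^{d+1}∖{N,S} = (S^d × (0,π), sin²s·g̃ + ds²)`: here `gt = g̃` and
`Γt = Γ̃` are the metric and the Christoffel symbols of the equator `S^d`, the last
coordinate is `s`, and
`Γ^a_{bc} = Γ̃^a_{bc}`, `Γ^n_{bc} = -½ sin(2s) g̃_{bc}`,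
`Γ^a_{nn} = Γ^n_{nn} = Γ^n_{bn} = 0`, `Γ^a_{bn} = (cos s/sin s)δ^a_b`. -/
def sphereΓ (d : ℕ) (gt : (Fin d → ℝ) → Fin d → Fin d → ℝ)
    (Γt : (Fin d → ℝ) → Fin d → Fin d → Fin d → ℝ) :
    (Fin (d+1) → ℝ) → Fin (d+1) → Fin (d+1) → Fin (d+1) → ℝ :=
  fun y α β γ =>
    let s : ℝ := y (Fin.last d)
    let yt : Fin d → ℝ := fun a => y (Fin.castSucc a)
    if hα : (α : ℕ) < d then
      if hβ : (β : ℕ) < d then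
        if hγ : (γ : ℕ) < d then Γt yt ⟨α.1, hα⟩ ⟨β.1, hβ⟩ ⟨γ.1, hγ⟩
        else (Real.cos s / Real.sin s) * (if (α : ℕ) = (β : ℕ) then 1 else 0)
      else
        if (γ : ℕ) < d then
          (Real.cos s / Real.sin s) * (if (α : ℕ) = (γ : ℕ) then 1 else 0)
        else 0
    else
      if hβ : (β : ℕ) < d then
        if hγ : (γ : ℕ) < d then -(1/2) * Real.sin (2*s) * gt yt ⟨β.1, hβ⟩ ⟨γ.1, hγ⟩
        else 0
      else 0

/-- Components of the round metric `sin²s·g̃ + ds²` of `S^{d+1}` in equator coordinates. -/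
def sphereMet (d : ℕ) (gt : (Fin d → ℝ) → Fin d → Fin d → ℝ) :
    (Fin (d+1) → ℝ) → Fin (d+1) → Fin (d+1) → ℝ :=
  fun y β γ =>
    let s : ℝ := y (Fin.last d)
    let yt : Fin d → ℝ := fun a => y (Fin.castSucc a)
    if hβ : (β : ℕ) < d then
      if hγ : (γ : ℕ) < d then Real.sin s ^ 2 * gt yt ⟨β.1, hβ⟩ ⟨γ.1, hγ⟩ else 0
    else if (γ : ℕ) < d then 0 else 1

/-- `gt` is a Riemannian metric on the chart of `S^d` and `Γt` is the family of
Christoffel symbols of its Levi-Civita connection. -/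
def LeviCivita (d : ℕ) (gt : (Fin d → ℝ) → Fin d → Fin d → ℝ)
    (Γt : (Fin d → ℝ) → Fin d → Fin d → Fin d → ℝ) : Prop :=
  (∀ y a b, gt y a b = gt y b a) ∧
  (∀ y (v : Fin d → ℝ), v ≠ 0 → 0 < ∑ a, ∑ b, gt y a b * v a * v b) ∧
  (∀ y a b c, Γt y a b c = Γt y a c b) ∧
  (∀ y a b c, pd c (fun z => gt z a b) y
    = (∑ e, gt y e b * Γt y e c a) + ∑ e, gt y a e * Γt y e c b)


open Asymptotics Filter

section PartialDerivatives

@[fun_prop]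
theorem contDiff_pd {f : (Fin m → ℝ) → ℝ} (hf : ContDiff ℝ (⊤ : ℕ∞) f) (i : Fin m) :
    ContDiff ℝ (⊤ : ℕ∞) (fun x => pd i f x) :=
  (hf.fderiv_right (by simp)).clm_apply contDiff_const

variable {f g : (Fin m → ℝ) → ℝ} {x : Fin m → ℝ}

theorem pd_add (hf : DifferentiableAt ℝ f x) (hg : DifferentiableAt ℝ g x) (i : Fin m) :
    pd i (fun x => f x + g x) x = pd i f x + pd i g x := by
  simp [pd, fderiv_fun_add hf hg]

theorem pd_mul (hf : DifferentiableAt ℝ f x) (hg : DifferentiableAt ℝ g x) (i : Fin m) :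
    pd i (fun x => f x * g x) x = pd i f x * g x + f x * pd i g x := by
  simp [pd, fderiv_fun_mul hf hg]
  ring

theorem pd_sum {ι : Type*} {s : Finset ι} {F : ι → (Fin m → ℝ) → ℝ}
    (hF : ∀ l ∈ s, DifferentiableAt ℝ (F l) x) (i : Fin m) :
    pd i (fun x => ∑ l ∈ s, F l x) x = ∑ l ∈ s, pd i (F l) x := by
  simp [pd, fderiv_fun_sum hF]

theorem pd_sub_const (i : Fin m) (c : ℝ) : pd i (fun x => f x - c) x = pd i f x := by
  simp [pd, fderiv_sub_const]

theorem pd_comp {h : ℝ → ℝ} (hh : DifferentiableAt ℝ h (f x)) (hf : DifferentiableAt ℝ f x)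
    (i : Fin m) : pd i (fun x => h (f x)) x = deriv h (f x) * pd i f x := by
  simp [pd, fderiv_fun_comp x hh hf, mul_comm]

theorem pd_apply_of_ne {i l : Fin m} (h : i ≠ l) : pd i (fun z => z l) x = 0 := by
  rw [pd, (hasFDerivAt_apply l x).fderiv]
  exact Pi.single_eq_of_ne h.symm 1

end PartialDerivatives

section EuclideanNorm

variable {ι : Type} [Fintype ι]

theorem vnorm_nonneg (f : ι → ℝ) : 0 ≤ vnorm f :=
  Real.sqrt_nonneg _

theorem abs_le_vnorm (f : ι → ℝ) (i : ι) : |f i| ≤ vnorm f :=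
  Real.abs_le_sqrt (Finset.single_le_sum (fun j _ => sq_nonneg (f j)) (Finset.mem_univ i))

theorem vnorm_le_sum_abs (f : ι → ℝ) : vnorm f ≤ ∑ i, |f i| := by
  refine (Real.sqrt_le_left (Finset.sum_nonneg fun i _ => abs_nonneg (f i))).2 ?_
  simpa only [sq_abs] using
    Finset.sum_sq_le_sq_sum_of_nonneg (s := Finset.univ) fun i _ => abs_nonneg (f i)

end EuclideanNorm

section Smoothness

variable {P : ChartData m n} {φ : (Fin m → ℝ) → Fin n → ℝ} {V : Set (Fin n → ℝ)}

theorem contDiff_ΓN_comp (hΓ : ∀ α β γ, ContDiffOn ℝ (⊤ : ℕ∞) (fun y => P.ΓN y α β γ) V)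
    (hφ : ContDiff ℝ (⊤ : ℕ∞) φ) (hφV : ∀ x, φ x ∈ V) (α β γ : Fin n) :
    ContDiff ℝ (⊤ : ℕ∞) fun x => P.ΓN (φ x) α β γ :=
  (hΓ α β γ).comp_contDiff hφ hφV

theorem contDiff_pd_ΓN_comp (hV : IsOpen V)
    (hΓ : ∀ α β γ, ContDiffOn ℝ (⊤ : ℕ∞) (fun y => P.ΓN y α β γ) V)
    (hφ : ContDiff ℝ (⊤ : ℕ∞) φ) (hφV : ∀ x, φ x ∈ V) (ω α β γ : Fin n) :
    ContDiff ℝ (⊤ : ℕ∞) fun x => pd ω (fun y => P.ΓN y α β γ) (φ x) :=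
  (((hΓ α β γ).fderiv_of_isOpen hV (by simp)).clm_apply contDiffOn_const).comp_contDiff hφ hφV

theorem contDiff_lap (hP : P.SmoothDomain) {f : (Fin m → ℝ) → ℝ}
    (hf : ContDiff ℝ (⊤ : ℕ∞) f) : ContDiff ℝ (⊤ : ℕ∞) (lap P f) := by
  have := hP.1
  have := hP.2
  unfold lap
  fun_prop

variable (hP : P.SmoothDomain) (hV : IsOpen V)
  (hΓ : ∀ α β γ, ContDiffOn ℝ (⊤ : ℕ∞) (fun y => P.ΓN y α β γ) V)
  (hφ : ContDiff ℝ (⊤ : ℕ∞) φ) (hφV : ∀ x, φ x ∈ V)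
include hV hΓ hφ hφV

theorem contDiff_Scoef_comp (α β ω ϑ : Fin n) :
    ContDiff ℝ (⊤ : ℕ∞) fun x => Scoef P (φ x) α β ω ϑ := by
  have := contDiff_ΓN_comp hΓ hφ hφV
  have := contDiff_pd_ΓN_comp hV hΓ hφ hφV
  unfold Scoef
  fun_prop

include hP

theorem contDiff_Asec {σ : (Fin m → ℝ) → Fin n → ℝ} (hσ : ContDiff ℝ (⊤ : ℕ∞) σ) (α : Fin n) :
    ContDiff ℝ (⊤ : ℕ∞) fun x => Asec P φ σ x α := by
  have := hP.1
  have := contDiff_ΓN_comp hΓ hφ hφV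
  have := contDiff_Scoef_comp hV hΓ hφ hφV
  have := fun β => contDiff_lap hP (f := fun x => φ x β) (by fun_prop)
  unfold Asec Aop dphi
  fun_prop

theorem contDiff_uvar (j : ℕ) : ContDiff ℝ (⊤ : ℕ∞) (uvar P φ j) := by
  induction j with
  | zero =>
    have := hP.1
    have := contDiff_ΓN_comp hΓ hφ hφV
    have := fun α => contDiff_lap hP (f := fun x => φ x α) (by fun_prop)
    refine contDiff_pi.2 fun α => ?_
    simp only [uvar, tension, dphi]
    fun_prop
  | succ j ih =>
    refine contDiff_pi.2 fun α => ?_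
    exact (contDiff_lap hP (contDiff_pi.1 ih α)).add (contDiff_Asec hP hV hΓ hφ hφV ih α)

end Smoothness

section EquatorIdeal

variable {d : ℕ}

def InEquatorIdeal (φ : (Fin m → ℝ) → Fin (d+1) → ℝ) (F : (Fin m → ℝ) → ℝ) : Prop :=
  ∃ (G : (Fin m → ℝ) → ℝ) (H : Fin m → (Fin m → ℝ) → ℝ),
    ContDiff ℝ (⊤ : ℕ∞) G ∧ (∀ i, ContDiff ℝ (⊤ : ℕ∞) (H i)) ∧
    F = fun x => Real.cos (φ x (Fin.last d)) * G x + ∑ i, dphi φ x i (Fin.last d) * H i x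

namespace InEquatorIdeal

variable {φ : (Fin m → ℝ) → Fin (d+1) → ℝ} {F F₁ F₂ G : (Fin m → ℝ) → ℝ}

theorem cos_mul (hG : ContDiff ℝ (⊤ : ℕ∞) G) :
    InEquatorIdeal φ fun x => Real.cos (φ x (Fin.last d)) * G x :=
  ⟨G, 0, hG, fun _ => contDiff_const, by simp⟩

theorem dphi_mul (i : Fin m) (hG : ContDiff ℝ (⊤ : ℕ∞) G) :
    InEquatorIdeal φ fun x => dphi φ x i (Fin.last d) * G x := by
  refine ⟨0, fun l => if l = i then G else 0, contDiff_const, fun l => ?_, ?_⟩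
  · dsimp only
    split_ifs
    exacts [hG, contDiff_const]
  · funext x
    simp [apply_ite (fun f : (Fin m → ℝ) → ℝ => f x)]

theorem add (h₁ : InEquatorIdeal φ F₁) (h₂ : InEquatorIdeal φ F₂) :
    InEquatorIdeal φ fun x => F₁ x + F₂ x := by
  obtain ⟨G₁, H₁, hG₁, hH₁, rfl⟩ := h₁
  obtain ⟨G₂, H₂, hG₂, hH₂, rfl⟩ := h₂
  refine ⟨G₁ + G₂, H₁ + H₂, hG₁.add hG₂, fun i => (hH₁ i).add (hH₂ i), ?_⟩
  funext x
  simp only [Pi.add_apply, mul_add, Finset.sum_add_distrib]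
  ring

theorem mul_left (hG : ContDiff ℝ (⊤ : ℕ∞) G) (h : InEquatorIdeal φ F) :
    InEquatorIdeal φ fun x => G x * F x := by
  obtain ⟨G', H, hG', hH, rfl⟩ := h
  refine ⟨G * G', fun i => G * H i, hG.mul hG', fun i => hG.mul (hH i), ?_⟩
  funext x
  simp only [Pi.mul_apply, mul_add, Finset.mul_sum]
  ring_nf

theorem sub (h₁ : InEquatorIdeal φ F₁) (h₂ : InEquatorIdeal φ F₂) :
    InEquatorIdeal φ fun x => F₁ x - F₂ x := by
  simpa [sub_eq_add_neg] using h₁.add (h₂.mul_left (G := fun _ => -1) contDiff_const)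

theorem sum {ι : Type*} (s : Finset ι) {F : ι → (Fin m → ℝ) → ℝ}
    (h : ∀ t ∈ s, InEquatorIdeal φ (F t)) : InEquatorIdeal φ fun x => ∑ t ∈ s, F t x := by
  classical
  induction s using Finset.induction_on with
  | empty => simpa using cos_mul (φ := φ) (contDiff_const (c := (0 : ℝ)))
  | insert a s ha ih =>
    simp only [Finset.sum_insert ha]
    exact (h a (Finset.mem_insert_self a s)).add (ih fun t ht => h t (Finset.mem_insert_of_mem ht))

end InEquatorIdeal

variable {φ : (Fin m → ℝ) → Fin (d+1) → ℝ}

theorem pd_cos_mul_add_sum_dphi_mul (hφ : ContDiff ℝ (⊤ : ℕ∞) φ) {G : (Fin m → ℝ) → ℝ}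
    {H : Fin m → (Fin m → ℝ) → ℝ} (hG : Differentiable ℝ G) (hH : ∀ l, Differentiable ℝ (H l))
    (i : Fin m) (x : Fin m → ℝ) :
    pd i (fun x => Real.cos (φ x (Fin.last d)) * G x + ∑ l, dphi φ x l (Fin.last d) * H l x) x
      = dphi φ x i (Fin.last d) * (-Real.sin (φ x (Fin.last d)) * G x)
        + Real.cos (φ x (Fin.last d)) * pd i G x
        + ∑ l, (pd i (fun z => dphi φ z l (Fin.last d)) x * H l x
          + dphi φ x l (Fin.last d) * pd i (H l) x) := by
  have hφ' : Differentiable ℝ φ := hφ.differentiable (by simp)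
  have hdφ : ∀ l, Differentiable ℝ fun x => dphi φ x l (Fin.last d) := fun l =>
    (contDiff_pd (by fun_prop) l).differentiable (by simp)
  rw [pd_add (by fun_prop) (by fun_prop), pd_mul (by fun_prop) (hG x),
    pd_comp (by fun_prop) (by fun_prop), Real.deriv_cos,
    pd_sum (F := fun l x => dphi φ x l (Fin.last d) * H l x) fun l _ => ((hdφ l).mul (hH l)) x]
  simp only [fun l => pd_mul ((hdφ l) x) (hH l x) i]
  unfold dphi
  ring

end EquatorIdeal

section SphereChristoffel

variable {d : ℕ} {gt : (Fin d → ℝ) → Fin d → Fin d → ℝ}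
  {Γt : (Fin d → ℝ) → Fin d → Fin d → Fin d → ℝ}

theorem contDiffOn_sphereΓ (hgt : ∀ a b, ContDiff ℝ (⊤ : ℕ∞) fun y => gt y a b)
    (hΓt : ∀ a b c, ContDiff ℝ (⊤ : ℕ∞) fun y => Γt y a b c) (α β γ : Fin (d+1)) :
    ContDiffOn ℝ (⊤ : ℕ∞) (fun y => sphereΓ d gt Γt y α β γ)
      {y | Real.sin (y (Fin.last d)) ≠ 0} := by
  unfold sphereΓ
  split_ifs <;> first
    | fun_prop
    | exact ((by fun_prop : ContDiffOn ℝ _ _ _).div (by fun_prop) fun y hy => hy).mul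
        contDiffOn_const

theorem isOpen_sin_last_ne_zero : IsOpen {y : Fin (d+1) → ℝ | Real.sin (y (Fin.last d)) ≠ 0} :=
  isOpen_ne_fun (by fun_prop) continuous_const

theorem exists_sphereΓ_last_eq_cos_mul (hgt : ∀ a b, ContDiff ℝ (⊤ : ℕ∞) fun y => gt y a b)
    (β γ : Fin (d+1)) : ∃ q : (Fin (d+1) → ℝ) → ℝ, ContDiff ℝ (⊤ : ℕ∞) q ∧
      (fun y => sphereΓ d gt Γt y (Fin.last d) β γ) = fun y => Real.cos (y (Fin.last d)) * q y := by
  refine ⟨fun y => if hβ : (β : ℕ) < d then if hγ : (γ : ℕ) < d then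
    -Real.sin (y (Fin.last d)) * gt (fun a => y a.castSucc) ⟨β, hβ⟩ ⟨γ, hγ⟩ else 0 else 0, ?_, ?_⟩
  · split_ifs <;> fun_prop
  · funext y
    simp only [sphereΓ, Fin.val_last, lt_irrefl, dite_false, Real.sin_two_mul]
    split_ifs <;> ring

theorem pd_cos_last_mul {q : (Fin (d+1) → ℝ) → ℝ} (hq : Differentiable ℝ q) {ω : Fin (d+1)}
    (hω : ω ≠ Fin.last d) (y : Fin (d+1) → ℝ) :
    pd ω (fun y => Real.cos (y (Fin.last d)) * q y) y = Real.cos (y (Fin.last d)) * pd ω q y := by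
  rw [pd_mul (by fun_prop) (hq y), pd_comp (by fun_prop) (by fun_prop), pd_apply_of_ne hω]
  ring

variable {φ : (Fin m → ℝ) → Fin (d+1) → ℝ}

theorem inEquatorIdeal_sphereΓ_last (hgt : ∀ a b, ContDiff ℝ (⊤ : ℕ∞) fun y => gt y a b)
    (hφ : ContDiff ℝ (⊤ : ℕ∞) φ) (β γ : Fin (d+1)) :
    InEquatorIdeal φ fun x => sphereΓ d gt Γt (φ x) (Fin.last d) β γ := by
  obtain ⟨q, hq, hΓq⟩ := exists_sphereΓ_last_eq_cos_mul (Γt := Γt) hgt β γ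
  simpa only [congrFun hΓq] using
    InEquatorIdeal.cos_mul (φ := φ) (G := fun x => q (φ x)) (hq.comp hφ)

theorem inEquatorIdeal_pd_sphereΓ_last (hgt : ∀ a b, ContDiff ℝ (⊤ : ℕ∞) fun y => gt y a b)
    (hφ : ContDiff ℝ (⊤ : ℕ∞) φ) {ω : Fin (d+1)} (hω : ω ≠ Fin.last d) (β γ : Fin (d+1)) :
    InEquatorIdeal φ fun x => pd ω (fun y => sphereΓ d gt Γt y (Fin.last d) β γ) (φ x) := by
  obtain ⟨q, hq, hΓq⟩ := exists_sphereΓ_last_eq_cos_mul (Γt := Γt) hgt β γ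
  simp only [hΓq, pd_cos_last_mul (hq.differentiable (by simp)) hω]
  exact InEquatorIdeal.cos_mul ((contDiff_pd hq ω).comp hφ)

end SphereChristoffel

section AsecLast

variable {d : ℕ} {P : ChartData m (d+1)} {φ : (Fin m → ℝ) → Fin (d+1) → ℝ}
  {V : Set (Fin (d+1) → ℝ)}
  (hP : P.SmoothDomain) (hV : IsOpen V)
  (hΓ : ∀ α β γ, ContDiffOn ℝ (⊤ : ℕ∞) (fun y => P.ΓN y α β γ) V)
  (hφ : ContDiff ℝ (⊤ : ℕ∞) φ) (hφV : ∀ x, φ x ∈ V)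
  (hrow : ∀ β γ, InEquatorIdeal φ fun x => P.ΓN (φ x) (Fin.last d) β γ)
  (hdrow : ∀ ω, ω ≠ Fin.last d → ∀ β γ,
    InEquatorIdeal φ fun x => pd ω (fun y => P.ΓN y (Fin.last d) β γ) (φ x))
include hΓ hφ hφV hrow hdrow

theorem inEquatorIdeal_Scoef_last {β ω : Fin (d+1)} (hβ : β ≠ Fin.last d)
    (hω : ω ≠ Fin.last d) (ϑ : Fin (d+1)) :
    InEquatorIdeal φ fun x => Scoef P (φ x) (Fin.last d) β ω ϑ := by
  have hΓφ := contDiff_ΓN_comp hΓ hφ hφV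
  simp only [Scoef, div_eq_inv_mul]
  refine InEquatorIdeal.mul_left contDiff_const
    (((((hdrow ω hω β ϑ).add ?_).add (hdrow β hβ ω ϑ))).add ?_) <;>
  exact InEquatorIdeal.sum _ fun γ _ => (hrow _ γ).mul_left (hΓφ γ _ ϑ)

include hP hV

theorem inEquatorIdeal_Scoef_term (i j : Fin m) (β ω ϑ : Fin (d+1)) :
    InEquatorIdeal φ fun x =>
      P.ginv x i j * dphi φ x j β * dphi φ x i ω * Scoef P (φ x) (Fin.last d) β ω ϑ := by
  have := hP.1
  have := contDiff_Scoef_comp hV hΓ hφ hφV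
  rcases eq_or_ne β (Fin.last d) with rfl | hβ
  · convert InEquatorIdeal.dphi_mul (φ := φ) j
      (G := fun x => P.ginv x i j * dphi φ x i ω * Scoef P (φ x) (Fin.last d) (Fin.last d) ω ϑ)
      (by unfold dphi; fun_prop) using 2
    ring
  rcases eq_or_ne ω (Fin.last d) with rfl | hω
  · convert InEquatorIdeal.dphi_mul (φ := φ) i
      (G := fun x => P.ginv x i j * dphi φ x j β * Scoef P (φ x) (Fin.last d) β (Fin.last d) ϑ)
      (by unfold dphi; fun_prop) using 2
    ring
  exact (inEquatorIdeal_Scoef_last hΓ hφ hφV hrow hdrow hβ hω ϑ).mul_left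
    (by unfold dphi; fun_prop)

theorem inEquatorIdeal_Asec_last {σ : (Fin m → ℝ) → Fin (d+1) → ℝ}
    (hσ : ContDiff ℝ (⊤ : ℕ∞) σ) : InEquatorIdeal φ fun x => Asec P φ σ x (Fin.last d) := by
  have := hP.1
  have hlap := fun β => contDiff_lap hP (f := fun x => φ x β) (by fun_prop)
  unfold Asec Aop
  refine (InEquatorIdeal.sum _ fun ϑ _ => InEquatorIdeal.sum _ fun i _ => ?_).add
    (InEquatorIdeal.sum _ fun ϑ _ => ((InEquatorIdeal.sum _ fun β _ => ?_).sub
      (InEquatorIdeal.sum _ fun i _ => InEquatorIdeal.sum _ fun j _ =>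
        InEquatorIdeal.sum _ fun β _ => InEquatorIdeal.sum _ fun ω _ =>
          inEquatorIdeal_Scoef_term hP hV hΓ hφ hφV hrow hdrow i j β ω ϑ)).mul_left
      (by fun_prop))
  · exact ((InEquatorIdeal.sum _ fun j _ => InEquatorIdeal.sum _ fun β _ =>
      (hrow β ϑ).mul_left (by unfold dphi; fun_prop)).mul_left contDiff_const).mul_left
      (by fun_prop)
  · exact (hrow β ϑ).mul_left (hlap β)

end AsecLast

section Estimates

theorem _root_.Asymptotics.IsBigO.mul_continuous {α : Type*} [TopologicalSpace α] {K : Set α}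
    {F g E : α → ℝ} (hF : F =O[𝓟 K] E) (hK : IsCompact K) (hg : Continuous g) :
    (fun x => F x * g x) =O[𝓟 K] E := by
  simpa using hF.mul (hg.continuousOn.isBigO_principal hK (c := (1 : ℝ)) (by norm_num))

variable {d : ℕ}

/-- The right-hand side `|f| + |df| + |∇dφ|` of the estimate, `f = φ^n - π/2`. -/
def equatorDeviation (P : ChartData m (d+1)) (φ : (Fin m → ℝ) → Fin (d+1) → ℝ)
    (x : Fin m → ℝ) : ℝ :=
  |φ x (Fin.last d) - Real.pi / 2|
    + vnorm (fun i : Fin m => pd i (fun w => φ w (Fin.last d) - Real.pi / 2) x)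
    + vnorm (fun p : Fin m × Fin m × Fin (d+1) => sff P φ x p.1 p.2.1 p.2.2)

variable {P : ChartData m (d+1)} {φ : (Fin m → ℝ) → Fin (d+1) → ℝ} {K : Set (Fin m → ℝ)}

theorem equatorDeviation_nonneg (x : Fin m → ℝ) : 0 ≤ equatorDeviation P φ x :=
  add_nonneg (add_nonneg (abs_nonneg _) (vnorm_nonneg _)) (vnorm_nonneg _)

theorem isBigO_equatorDeviation_of_le {l : Filter (Fin m → ℝ)} {F : (Fin m → ℝ) → ℝ}
    (h : ∀ x, |F x| ≤ equatorDeviation P φ x) : F =O[l] equatorDeviation P φ :=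
  isBigO_of_le l fun x => by
    simpa [abs_of_nonneg (equatorDeviation_nonneg x)] using h x

theorem isBigO_cos_last (l : Filter (Fin m → ℝ)) :
    (fun x => Real.cos (φ x (Fin.last d))) =O[l] equatorDeviation P φ :=
  isBigO_equatorDeviation_of_le fun x => by
    have h := Real.abs_sin_le_abs (x := φ x (Fin.last d) - Real.pi / 2)
    rw [Real.sin_sub_pi_div_two, abs_neg] at h
    exact h.trans (le_add_of_le_of_nonneg (le_add_of_nonneg_right (vnorm_nonneg _))
      (vnorm_nonneg _))

theorem isBigO_dphi_last (l : Filter (Fin m → ℝ)) (i : Fin m) :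
    (fun x => dphi φ x i (Fin.last d)) =O[l] equatorDeviation P φ :=
  isBigO_equatorDeviation_of_le fun x => by
    have h := abs_le_vnorm (fun i : Fin m => pd i (fun w => φ w (Fin.last d) - Real.pi / 2) x) i
    rw [pd_sub_const] at h
    exact h.trans (le_add_of_le_of_nonneg (le_add_of_nonneg_left (abs_nonneg _))
      (vnorm_nonneg _))

theorem isBigO_sff (l : Filter (Fin m → ℝ)) (i j : Fin m) (α : Fin (d+1)) :
    (fun x => sff P φ x i j α) =O[l] equatorDeviation P φ :=
  isBigO_equatorDeviation_of_le fun x =>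
    (abs_le_vnorm (fun p : Fin m × Fin m × Fin (d+1) => sff P φ x p.1 p.2.1 p.2.2) (i, j, α)).trans
      (le_add_of_nonneg_left (add_nonneg (abs_nonneg _) (vnorm_nonneg _)))

theorem InEquatorIdeal.isBigO (hK : IsCompact K) {F : (Fin m → ℝ) → ℝ}
    (hF : InEquatorIdeal φ F) : F =O[𝓟 K] equatorDeviation P φ := by
  obtain ⟨G, H, hG, hH, rfl⟩ := hF
  exact ((isBigO_cos_last _).mul_continuous hK hG.continuous).add
    (IsBigO.fun_sum fun i _ => (isBigO_dphi_last _ i).mul_continuous hK (hH i).continuous)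

variable (hK : IsCompact K) (hP : P.SmoothDomain) (hφ : ContDiff ℝ (⊤ : ℕ∞) φ)
  (hrow : ∀ β γ, InEquatorIdeal φ fun x => P.ΓN (φ x) (Fin.last d) β γ)
include hK hP hφ hrow

theorem isBigO_hessian_last (i l : Fin m) :
    (fun x => pd i (fun z => dphi φ z l (Fin.last d)) x) =O[𝓟 K] equatorDeviation P φ := by
  have hhess : (fun x => pd i (fun z => dphi φ z l (Fin.last d)) x) = fun x =>
      sff P φ x i l (Fin.last d) + ∑ k, dphi φ x k (Fin.last d) * P.ΓM x k i l
        - ∑ β, ∑ γ, P.ΓN (φ x) (Fin.last d) β γ * dphi φ x i β * dphi φ x l γ := by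
    funext x
    simp only [sff, mul_comm (P.ΓM x _ i l)]
    ring
  have := hP.2
  rw [hhess]
  refine ((isBigO_sff _ i l _).add (IsBigO.fun_sum fun k _ =>
    (isBigO_dphi_last _ k).mul_continuous hK (by fun_prop))).sub
    (IsBigO.fun_sum fun β _ => IsBigO.fun_sum fun γ _ => ?_)
  exact (((hrow β γ).isBigO hK).mul_continuous hK (by unfold dphi; fun_prop)).mul_continuous hK
    (by unfold dphi; fun_prop)

theorem InEquatorIdeal.isBigO_pd {F : (Fin m → ℝ) → ℝ} (hF : InEquatorIdeal φ F) (i : Fin m) :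
    (fun x => pd i F x) =O[𝓟 K] equatorDeviation P φ := by
  obtain ⟨G, H, hG, hH, rfl⟩ := hF
  have := hφ.continuous
  simp only [pd_cos_mul_add_sum_dphi_mul hφ (hG.differentiable (by simp))
    fun l => (hH l).differentiable (by simp)]
  refine ((isBigO_dphi_last _ i).mul_continuous hK (by fun_prop)).add
    ((isBigO_cos_last _).mul_continuous hK (by fun_prop)) |>.add
    (IsBigO.fun_sum fun l _ => ((isBigO_hessian_last hK hP hφ hrow i l).mul_continuous hK
      (hH l).continuous).add ((isBigO_dphi_last _ l).mul_continuous hK (by fun_prop)))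

theorem InEquatorIdeal.isBigO_vnorm_pd {F : (Fin m → ℝ) → ℝ} (hF : InEquatorIdeal φ F) :
    (fun x => vnorm fun i => pd i F x) =O[𝓟 K] equatorDeviation P φ := by
  refine (isBigO_of_le _ fun x => ?_).trans
    (IsBigO.fun_sum (s := Finset.univ) fun i _ => (hF.isBigO_pd hK hP hφ hrow i).norm_left)
  rw [Real.norm_of_nonneg (vnorm_nonneg _)]
  exact (vnorm_le_sum_abs _).trans (le_abs_self _)

end Estimates

theorem sphere_estimate_dA_general
    {m d : ℕ} (P : ChartData m (d+1))
    (gt : (Fin d → ℝ) → Fin d → Fin d → ℝ)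
    (Γt : (Fin d → ℝ) → Fin d → Fin d → Fin d → ℝ)
    (hΓN : P.ΓN = sphereΓ d gt Γt)
    (hPdom : P.SmoothDomain)
    (hgt : ∀ a b, ContDiff ℝ (⊤ : ℕ∞) fun y => gt y a b)
    (hΓt : ∀ a b c, ContDiff ℝ (⊤ : ℕ∞) fun y => Γt y a b c)
    (φ : (Fin m → ℝ) → Fin (d+1) → ℝ) (hφ : ContDiff ℝ (⊤ : ℕ∞) φ)
    (hchart : ∀ x, 0 < φ x (Fin.last d) ∧ φ x (Fin.last d) < Real.pi)
    (k : ℕ)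
    (D : Set (Fin m → ℝ)) (hDcpt : IsCompact (closure D)) :
    ∀ j ≤ k - 3, ∃ C > 0, ∀ x ∈ D,
      vnorm (fun i : Fin m =>
          pd i (fun z => Asec P φ (uvar P φ j) z (Fin.last d)) x)
        ≤ C * (|φ x (Fin.last d) - Real.pi / 2|
          + vnorm (fun i : Fin m => pd i (fun w => φ w (Fin.last d) - Real.pi / 2) x)
          + vnorm (fun p : Fin m × Fin m × Fin (d+1) => sff P φ x p.1 p.2.1 p.2.2)) := by
  intro j _
  have hΓ : ∀ α β γ, ContDiffOn ℝ (⊤ : ℕ∞) (fun y => P.ΓN y α β γ)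
      {y | Real.sin (y (Fin.last d)) ≠ 0} := hΓN ▸ contDiffOn_sphereΓ hgt hΓt
  have hsin : ∀ x, Real.sin (φ x (Fin.last d)) ≠ 0 := fun x =>
    (Real.sin_pos_of_pos_of_lt_pi (hchart x).1 (hchart x).2).ne'
  have hrow : ∀ β γ, InEquatorIdeal φ fun x => P.ΓN (φ x) (Fin.last d) β γ :=
    hΓN ▸ inEquatorIdeal_sphereΓ_last hgt hφ
  have hdrow : ∀ ω, ω ≠ Fin.last d → ∀ β γ,
      InEquatorIdeal φ fun x => pd ω (fun y => P.ΓN y (Fin.last d) β γ) (φ x) :=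
    hΓN ▸ fun ω hω => inEquatorIdeal_pd_sphereΓ_last hgt hφ hω
  have hA := inEquatorIdeal_Asec_last hPdom isOpen_sin_last_ne_zero hΓ hφ hsin hrow hdrow
    (contDiff_uvar hPdom isOpen_sin_last_ne_zero hΓ hφ hsin j)
  obtain ⟨C, hC, hbound⟩ := (hA.isBigO_vnorm_pd hDcpt hPdom hφ hrow).exists_pos
  refine ⟨C, hC, fun x hx => ?_⟩
  have := isBigOWith_principal.1 hbound x (subset_closure hx)
  rwa [Real.norm_of_nonneg (vnorm_nonneg _), Real.norm_of_nonneg (equatorDeviation_nonneg x)]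
    at this

/-- (Lemma 2.10 of the paper.)
Let `φ : M → S^n` (`n = d+1`) be a smooth map in the equator coordinates, with
`f = φ^n - π/2`. Then on any open set `D` with compact closure contained in the
chart domain `U`, for `0 ≤ j ≤ k-3` there exists `C > 0` with
`|dA^n_{j+1}| ≤ C(|f| + |df| + |∇df|)`. -/
theorem sphere_estimate_dA
    {m d : ℕ} (P : ChartData m (d+1))
    (gt : (Fin d → ℝ) → Fin d → Fin d → ℝ)
    (Γt : (Fin d → ℝ) → Fin d → Fin d → Fin d → ℝ)
    (hΓN : P.ΓN = sphereΓ d gt Γt)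
    (hPdom : P.SmoothDomain) (hPriem : P.Riemannian)
    (hgt : ∀ a b, ContDiff ℝ (⊤ : ℕ∞) fun y => gt y a b)
    (hΓt : ∀ a b c, ContDiff ℝ (⊤ : ℕ∞) fun y => Γt y a b c)
    (hLC : LeviCivita d gt Γt)
    (U : Set (Fin m → ℝ)) (hUopen : IsOpen U)
    (φ : (Fin m → ℝ) → Fin (d+1) → ℝ) (hφ : ContDiff ℝ (⊤ : ℕ∞) φ)
    (hchart : ∀ x, 0 < φ x (Fin.last d) ∧ φ x (Fin.last d) < Real.pi)
    (k : ℕ) (hk : 3 ≤ k)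
    (D : Set (Fin m → ℝ)) (hDopen : IsOpen D) (hDcpt : IsCompact (closure D))
    (hDsub : closure D ⊆ U) :
    ∀ j ≤ k - 3, ∃ C > 0, ∀ x ∈ D,
      vnorm (fun i : Fin m =>
          pd i (fun z => Asec P φ (uvar P φ j) z (Fin.last d)) x)
        ≤ C * (|φ x (Fin.last d) - Real.pi / 2|
          + vnorm (fun i : Fin m => pd i (fun w => φ w (Fin.last d) - Real.pi / 2) x)
          + vnorm (fun p : Fin m × Fin m × Fin (d+1) => sff P φ x p.1 p.2.1 p.2.2)) :=
  sphere_estimate_dA_general P gt Γt hΓN hPdom hgt hΓt φ hφ hchart k D hDcpt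

end Polyharm
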